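/- For R = {ab → baa}, every string in RFC(R) that lies in b*a* has the form b^n a^{2^n} for some n ≥ 1; consequently RFC(R) is not a regular language. -/
import Mathlib


inductive AB where
  | a : AB
  | b : AB
deriving DecidableEq

/-- Right-hand sides of forward closures of `R`. -/
inductive RFC {Γ : Type*} (R : Set (List Γ × List Γ)) : List Γ → Prop where
  | base {l r : List Γ} : (l, r) ∈ R → RFC R r
  | inner {x y l r : List Γ} : RFC R (x ++ l ++ y) → (l, r) ∈ R → RFC R (x ++ r ++ y)
  | eat {x l₁ l₂ r : List Γ} : RFC R (x ++ l₁) → (l₁ ++ l₂, r) ∈ R →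
      l₁ ≠ [] → l₂ ≠ [] → RFC R (x ++ r)

open AB in
/-- `R = {ab → baa}`. -/
def R11 : Set (List AB × List AB) :=
  {([a, b], [b, a, a])}

open AB

def phi : List AB → ℕ
  | [] => 0
  | AB.a :: t => 2 ^ (t.count AB.b) + phi t
  | AB.b :: t => phi t

lemma phi_append (x y : List AB) :
    phi (x ++ y) = phi x * 2 ^ (y.count b) + phi y := by
  induction x with
  | nil => simp [phi]
  | cons h t ih =>
    cases h <;> simp [phi, ih, List.count_append, pow_add] <;> ring

lemma R11_eq {l r : List AB} (h : (l, r) ∈ R11) : l = [a, b] ∧ r = [b, a, a] := by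
  simpa [R11, Prod.ext_iff] using h

lemma rfc_invariant {w : List AB} (h : RFC R11 w) :
    phi w = 2 ^ (w.count b) ∧ 1 ≤ w.count b := by
  induction h with
  | base h =>
    obtain ⟨-, rfl⟩ := R11_eq h
    simp [phi]
  | inner _ h ih =>
    obtain ⟨rfl, rfl⟩ := R11_eq h
    obtain ⟨ih1, ih2⟩ := ih
    simp only [phi_append, List.count_append, phi] at ih1 ih2 ⊢
    norm_num at ih1 ih2 ⊢
    exact ⟨ih1, ih2⟩
  | eat _ h hl₁ hl₂ ih =>
    rename_i x l₁ l₂ r hw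
    obtain ⟨h1, rfl⟩ := R11_eq h
    have hl : l₁ = [AB.a] ∧ l₂ = [AB.b] := by
      rcases l₁ with _ | ⟨c, _ | ⟨d, t⟩⟩
      · exact absurd rfl hl₁
      · rcases l₂ with _ | ⟨e, t'⟩
        · exact absurd rfl hl₂
        · simp_all
      · simp only [List.cons_append, List.cons.injEq] at h1
        obtain ⟨rfl, rfl, h2⟩ := h1
        exact absurd (List.append_eq_nil_iff.mp h2).2 hl₂
    obtain ⟨rfl, rfl⟩ := hl
    rw [phi_append, List.count_append] at ih ⊢
    simp [phi] at ih ⊢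
    obtain ⟨h1, h2⟩ := ih
    rw [pow_succ]
    linarith [h1]

lemma phi_rep_a (m : ℕ) : phi (List.replicate m a) = m := by
  induction m with
  | zero => simp [phi]
  | succ m ih =>
    simp [List.replicate_succ, phi, ih, List.count_replicate]
    omega

lemma phi_rep_b (n : ℕ) : phi (List.replicate n b) = 0 := by
  induction n with
  | zero => simp [phi]
  | succ n ih => simp [List.replicate_succ, phi, ih]

lemma rfc_move (x : List AB) (m : ℕ) : ∀ y : List AB,
    RFC R11 (x ++ List.replicate m a ++ [b] ++ y) →
    RFC R11 (x ++ [b] ++ List.replicate (2 * m) a ++ y) := by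
  induction m with
  | zero => intro y h; simpa using h
  | succ m ih =>
    intro y h
    have h' : RFC R11 ((x ++ List.replicate m a) ++ [a, b] ++ y) := by
      have : x ++ List.replicate (m + 1) a ++ [b] ++ y
          = (x ++ List.replicate m a) ++ [a, b] ++ y := by
        simp [List.replicate_succ' (n := m)]
      rwa [this] at h
    have h2 := RFC.inner h' (show ([a,b],[b,a,a]) ∈ R11 from rfl)
    have h3 : RFC R11 (x ++ List.replicate m a ++ [b] ++ ([a, a] ++ y)) := by
      have : (x ++ List.replicate m a) ++ [b, a, a] ++ y
          = x ++ List.replicate m a ++ [b] ++ ([a, a] ++ y) := by simp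
      rwa [this] at h2
    have h4 := ih ([a, a] ++ y) h3
    have : x ++ [b] ++ List.replicate (2 * m) a ++ ([a, a] ++ y)
        = x ++ [b] ++ List.replicate (2 * (m + 1)) a ++ y := by
      have h5 : 2 * (m + 1) = 2 * m + 2 := by ring
      simp [h5, List.replicate_add]
    rwa [this] at h4

lemma rfc_pow (n : ℕ) (hn : 1 ≤ n) :
    RFC R11 (List.replicate n b ++ List.replicate (2 ^ n) a) := by
  induction n with
  | zero => omega
  | succ n ih =>
    rcases Nat.eq_or_lt_of_le hn with h | h
    · have : List.replicate 1 b ++ List.replicate (2 ^ 1) a = [b, a, a] := by decide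
      rw [← h]
      rw [this]
      exact RFC.base rfl
    · have hn' : 1 ≤ n := by omega
      have ih := ih hn'
      have hsplit : List.replicate n b ++ List.replicate (2 ^ n) a
          = (List.replicate n b ++ List.replicate (2 ^ n - 1) a) ++ [a] := by
        have : 2 ^ n = (2 ^ n - 1) + 1 := by
          have : 1 ≤ 2 ^ n := Nat.one_le_two_pow
          omega
        rw [this]
        simp [List.replicate_succ' (n := 2 ^ n - 1)]
      rw [hsplit] at ih
      have h2 := RFC.eat (l₁ := [a]) (l₂ := [b]) ih rfl (by simp) (by simp)
      have h3 : RFC R11 (List.replicate n b ++ List.replicate (2 ^ n - 1) a ++ [b] ++ [a, a]) := by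
        have : (List.replicate n b ++ List.replicate (2 ^ n - 1) a) ++ [b, a, a]
            = List.replicate n b ++ List.replicate (2 ^ n - 1) a ++ [b] ++ [a, a] := by simp
        rwa [this] at h2
      have h4 := rfc_move (List.replicate n b) (2 ^ n - 1) [a, a] h3
      have : List.replicate n b ++ [b] ++ List.replicate (2 * (2 ^ n - 1)) a ++ [a, a]
          = List.replicate (n + 1) b ++ List.replicate (2 ^ (n + 1)) a := by
        have h1 : 1 ≤ 2 ^ n := Nat.one_le_two_pow
        have h5 : 2 ^ (n + 1) = 2 * (2 ^ n - 1) + 2 := by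
          rw [pow_succ]; omega
        rw [h5, List.replicate_succ' (n := n), List.replicate_add]
        simp [List.replicate]
      rwa [this] at h4

lemma part1 (w : List AB) (hw : RFC R11 w)
    (hform : ∃ n m : ℕ, w = List.replicate n b ++ List.replicate m a) :
    ∃ n : ℕ, 1 ≤ n ∧ w = List.replicate n b ++ List.replicate (2 ^ n) a := by
  obtain ⟨n, m, rfl⟩ := hform
  obtain ⟨h1, h2⟩ := rfc_invariant hw
  rw [phi_append, List.count_append, phi_rep_a, phi_rep_b] at h1
  simp [List.count_replicate] at h1 h2
  exact ⟨n, h2, by rw [h1]⟩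

open AB in
/-- Every string of `RFC(R)` lying in `b*a*` has the form `b^n a^{2^n}` with `n ≥ 1`;
consequently `RFC(R)` is not a regular language. -/
theorem rfc_R11 :
    (∀ w : List AB, RFC R11 w →
      (∃ n m : ℕ, w = List.replicate n b ++ List.replicate m a) →
      ∃ n : ℕ, 1 ≤ n ∧ w = List.replicate n b ++ List.replicate (2 ^ n) a) ∧
    ¬ Language.IsRegular ({ w | RFC R11 w } : Language AB) := by
  refine ⟨part1, ?_⟩
  rintro ⟨σ, fin, M, hM⟩
  set N := Fintype.card σ with hN
  set x : List AB := List.replicate (N + 1) b ++ List.replicate (2 ^ (N + 1)) a with hx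
  have hxmem : x ∈ M.accepts := by
    rw [hM]
    exact rfc_pow (N + 1) (by omega)
  have hlen : N ≤ x.length := by
    have h1 : 1 ≤ 2 ^ N := Nat.one_le_two_pow
    simp [hx, pow_succ]
    omega
  obtain ⟨u, v, c, hsplit, hle, hvne, hpump⟩ := M.pumping_lemma hxmem hlen
  have hk : u.length + v.length ≤ N + 1 := by omega
  have huv : u ++ v = List.replicate (u.length + v.length) b ∧
      c = List.replicate (N + 1 - (u.length + v.length)) b ++ List.replicate (2 ^ (N + 1)) a := by
    have hx2 : (u ++ v) ++ c
        = List.replicate (u.length + v.length) b ++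
          (List.replicate (N + 1 - (u.length + v.length)) b ++ List.replicate (2 ^ (N + 1)) a) := by
      rw [← List.append_assoc, ← List.replicate_add]
      have : u.length + v.length + (N + 1 - (u.length + v.length)) = N + 1 := by omega
      rw [this, ← hsplit, hx]
    have hlenuv : (u ++ v).length = (List.replicate (u.length + v.length) b).length := by
      simp
    exact List.append_inj hx2 hlenuv
  obtain ⟨huv1, hc⟩ := huv
  have hu : u = List.replicate u.length b := by
    have := congrArg (List.take u.length) huv1
    simpa [List.take_left, List.take_replicate, Nat.min_def] using this
  have hv : v = List.replicate v.length b := by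
    have := congrArg (List.drop u.length) huv1
    simpa [List.drop_left, List.drop_replicate] using this
  have hpm : u ++ (v ++ v) ++ c ∈ M.accepts := by
    apply hpump
    refine ⟨u ++ (v ++ v), ⟨u, rfl, v ++ v, ?_, rfl⟩, c, rfl, rfl⟩
    exact Language.mem_kstar.mpr ⟨[v, v], by simp, by rintro y hy; simp only [List.mem_cons, List.not_mem_nil, or_false] at hy; rcases hy with rfl | rfl <;> rfl⟩
  rw [hM] at hpm
  have hrfc : RFC R11 (u ++ (v ++ v) ++ c) := hpm
  obtain ⟨p, hup⟩ : ∃ p, u = List.replicate p b ∧ p = u.length := ⟨u.length, hu, rfl⟩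
  obtain ⟨q, hvq⟩ : ∃ q, v = List.replicate q b ∧ q = v.length := ⟨v.length, hv, rfl⟩
  obtain ⟨hu', hpl⟩ := hup
  obtain ⟨hv', hql⟩ := hvq
  have hq1 : 1 ≤ q := by
    rcases Nat.eq_zero_or_pos q with h0 | h0
    · exact absurd (by rw [hv', h0]; rfl) hvne
    · omega
  rw [hu', hv', hc, ← hpl, ← hql] at hrfc
  have hform : List.replicate p b ++ (List.replicate q b ++ List.replicate q b) ++
      (List.replicate (N + 1 - (p + q)) b ++ List.replicate (2 ^ (N + 1)) a)
      = List.replicate (N + 1 + q) b ++ List.replicate (2 ^ (N + 1)) a := by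
    rw [show N + 1 + q = p + (q + (q + (N + 1 - (p + q)))) by omega,
      List.replicate_add, List.replicate_add, List.replicate_add]
    simp only [List.append_assoc]
  have hk' : p + q ≤ N + 1 := by omega
  rw [hform] at hrfc
  obtain ⟨n, hn1, hn2⟩ := part1 _ hrfc ⟨N + 1 + q, 2 ^ (N + 1), rfl⟩
  have hcb := congrArg (List.count b) hn2
  have hca := congrArg (List.count a) hn2
  simp [List.count_append, List.count_replicate] at hcb hca
  omega
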